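/- Let φ be C^{k+1} on [0,1] and H its degree-(2k+1) Hermite interpolant matching derivatives of orders 0 through k at both endpoints. Then ∫_0^1 H(x) dx = ∫_0^1 φ(x) dx − ∫_0^1 μ_k(x) φ^{(k+1)}(x) dx, where μ_k = r_k^{(k+1)} and r_k(x) = x^{k+1}(1−x)^{k+1}/(2k+2)!. -/

import Mathlib

/-!
Let `e = φ - H`. The interpolation conditions say that `e, e', …, e^{(k)}` vanish at both
endpoints, and `r_k, …, r_k^{(k)}` vanish there as well since `r_k` has zeros of order `k + 1`
at `0` and `1`. Integrating by parts `k + 1` times therefore produces no boundary terms: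
`∫ μ_k e^{(k+1)} = (-1)^{k+1} ∫ r_k^{(2k+2)} e = ∫ e`, because `r_k^{(2k+2)} = (-1)^{k+1}`,
and `∫ μ_k H^{(k+1)} = (-1)^{k+1} ∫ r_k H^{(2k+2)} = 0`, because `deg H ≤ 2k + 1`.
-/

open Polynomial Set intervalIntegral Topology

namespace Polynomial

theorem iteratedDeriv_eval {𝕜 : Type*} [NontriviallyNormedField 𝕜] (p : 𝕜[X]) (n : ℕ) :
    iteratedDeriv n (fun x => p.eval x) = fun x => (derivative^[n] p).eval x := by
  induction n with
  | zero => simp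
  | succ n ih =>
    ext x
    rw [iteratedDeriv_succ, ih, Function.iterate_succ_apply']
    exact Polynomial.deriv _

theorem hasDerivAt_iterate_derivative {𝕜 : Type*} [NontriviallyNormedField 𝕜] (p : 𝕜[X])
    (m : ℕ) (x : 𝕜) :
    HasDerivAt (fun x => (derivative^[m] p).eval x) ((derivative^[m + 1] p).eval x) x := by
  rw [Function.iterate_succ_apply']
  exact Polynomial.hasDerivAt _ x

theorem eval_iterate_derivative_eq_zero_of_pow_dvd {R : Type*} [CommRing R] {p : R[X]} {t : R}
    {n m : ℕ} (hdvd : (X - C t) ^ n ∣ p) (hm : m < n) : (derivative^[m] p).eval t = 0 :=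
  dvd_iff_isRoot.mp <| (dvd_pow_self _ (Nat.sub_ne_zero_of_lt hm)).trans
    (pow_sub_dvd_iterate_derivative_of_pow_dvd m hdvd)

theorem iterate_derivative_natDegree {R : Type*} [CommRing R] (p : R[X]) :
    derivative^[p.natDegree] p = C (p.natDegree.factorial • p.leadingCoeff) := by
  rw [eq_C_of_natDegree_le_zero (p := derivative^[p.natDegree] p)
    (by simpa using natDegree_iterate_derivative p p.natDegree), coeff_iterate_derivative,
    zero_add, Nat.descFactorial_self, leadingCoeff]

end Polynomial

theorem ContDiffOn.hasDerivAt_iteratedDerivWithin {𝕜 F : Type*} [NontriviallyNormedField 𝕜]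
    [NormedAddCommGroup F] [NormedSpace 𝕜 F] {f : 𝕜 → F} {s : Set 𝕜} {x : 𝕜}
    {n : WithTop ℕ∞} {m : ℕ} (hf : ContDiffOn 𝕜 n f s) (hmn : (m : WithTop ℕ∞) < n)
    (hs : UniqueDiffOn 𝕜 s) (hx : s ∈ 𝓝 x) :
    HasDerivAt (iteratedDerivWithin m f s) (iteratedDerivWithin (m + 1) f s x) x := by
  rw [iteratedDerivWithin_succ]
  exact ((hf.differentiableOn_iteratedDerivWithin hmn hs) x (mem_of_mem_nhds hx))
    |>.hasDerivWithinAt.hasDerivAt hx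

theorem intervalIntegral.integral_mul_iterated_by_parts {a b : ℝ} (hab : a ≤ b) (n : ℕ)
    (u v : ℕ → ℝ → ℝ)
    (hu : ∀ m ≤ n, ContinuousOn (u m) (Icc a b)) (hv : ∀ m ≤ n, ContinuousOn (v m) (Icc a b))
    (hu' : ∀ m < n, ∀ x ∈ Ioo a b, HasDerivAt (u m) (u (m + 1) x) x)
    (hv' : ∀ m < n, ∀ x ∈ Ioo a b, HasDerivAt (v m) (v (m + 1) x) x)
    (hbdry : ∀ i j, i + j + 1 = n → u i b * v j b = u i a * v j a) :
    ∫ x in a..b, u 0 x * v n x = (-1) ^ n * ∫ x in a..b, u n x * v 0 x := by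
  induction n generalizing u with
  | zero => simp
  | succ n ih =>
    have hI : uIcc a b = Icc a b := uIcc_of_le hab
    have hO : Ioo (min a b) (max a b) = Ioo a b := by rw [min_eq_left hab, max_eq_right hab]
    have hstep := integral_mul_deriv_eq_deriv_mul_of_hasDerivAt (hI ▸ hu 0 (by omega))
      (hI ▸ hv n (by omega)) (hO ▸ hu' 0 (by omega)) (hO ▸ hv' n (by omega))
      ((hu 1 (by omega)).intervalIntegrable_of_Icc hab)
      ((hv (n + 1) le_rfl).intervalIntegrable_of_Icc hab)
    have hshift := ih (fun m => u (m + 1)) (fun m hm => hu (m + 1) (by omega))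
      (fun m hm => hv m (by omega)) (fun m hm => hu' (m + 1) (by omega))
      (fun m hm => hv' m (by omega)) (fun i j hij => hbdry (i + 1) j (by omega))
    rw [hstep, hbdry 0 n (by omega), hshift]
    ring

noncomputable def hermiteKernel (k : ℕ) : ℝ[X] :=
  C ((2 * k + 2).factorial : ℝ)⁻¹ * (X * (1 - X)) ^ (k + 1)

theorem hermiteKernel_eval (k : ℕ) (x : ℝ) :
    (hermiteKernel k).eval x = x ^ (k + 1) * (1 - x) ^ (k + 1) / (2 * k + 2).factorial := by
  simp [hermiteKernel, mul_pow]
  ring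

theorem natDegree_X_mul_one_sub_X : (X * (1 - X) : ℝ[X]).natDegree = 2 := by
  compute_degree!

theorem leadingCoeff_X_mul_one_sub_X : (X * (1 - X) : ℝ[X]).leadingCoeff = -1 := by
  rw [leadingCoeff, natDegree_X_mul_one_sub_X]
  simp [mul_sub, coeff_X]

theorem iterate_derivative_hermiteKernel_top (k : ℕ) :
    derivative^[2 * k + 2] (hermiteKernel k) = C ((-1) ^ (k + 1)) := by
  have hc : ((2 * k + 2).factorial : ℝ)⁻¹ ≠ 0 := by positivity
  have hdeg : (hermiteKernel k).natDegree = 2 * k + 2 := by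
    rw [hermiteKernel, natDegree_C_mul hc, natDegree_pow, natDegree_X_mul_one_sub_X]
    ring
  rw [← hdeg, iterate_derivative_natDegree, hdeg, hermiteKernel, leadingCoeff_mul, leadingCoeff_C,
    leadingCoeff_pow, leadingCoeff_X_mul_one_sub_X, nsmul_eq_mul, ← mul_assoc,
    mul_inv_cancel₀ (by positivity), one_mul]

theorem eval_iterate_derivative_hermiteKernel_zero {k m : ℕ} (hm : m ≤ k) :
    (derivative^[m] (hermiteKernel k)).eval 0 = 0 := by
  refine eval_iterate_derivative_eq_zero_of_pow_dvd (n := k + 1) ?_ (by omega)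
  rw [C_0, sub_zero, hermiteKernel, mul_pow]
  exact dvd_mul_of_dvd_right (dvd_mul_right _ _) _

theorem eval_iterate_derivative_hermiteKernel_one {k m : ℕ} (hm : m ≤ k) :
    (derivative^[m] (hermiteKernel k)).eval 1 = 0 := by
  refine eval_iterate_derivative_eq_zero_of_pow_dvd (n := k + 1) ?_ (by omega)
  have h : X - C (1 : ℝ) ∣ 1 - X := ⟨-1, by rw [C_1]; ring⟩
  rw [hermiteKernel, mul_pow]
  exact dvd_mul_of_dvd_right (dvd_mul_of_dvd_right (pow_dvd_pow_of_dvd h _) _) _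

theorem integral_iterate_derivative_hermiteKernel_mul_eq_zero {k : ℕ} {P : ℝ[X]}
    (hP : P.natDegree ≤ 2 * k + 1) :
    ∫ x in (0 : ℝ)..1,
      (derivative^[k + 1] (hermiteKernel k)).eval x * (derivative^[k + 1] P).eval x = 0 := by
  have h := integral_mul_iterated_by_parts zero_le_one (k + 1)
    (fun m x => (derivative^[m] (hermiteKernel k)).eval x)
    (fun m x => (derivative^[k + 1 + m] P).eval x)
    (fun m _ => (derivative^[m] _).continuous.continuousOn)
    (fun m _ => (derivative^[k + 1 + m] P).continuous.continuousOn)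
    (fun m _ x _ => hasDerivAt_iterate_derivative _ m x)
    (fun m _ x _ => hasDerivAt_iterate_derivative P (k + 1 + m) x)
    (fun i j hij => by
      simp only [eval_iterate_derivative_hermiteKernel_zero (show i ≤ k by omega),
        eval_iterate_derivative_hermiteKernel_one (show i ≤ k by omega), zero_mul])
  rw [iterate_derivative_eq_zero (by omega : P.natDegree < k + 1 + (k + 1))] at h
  simpa using h.symm

theorem integral_iterate_derivative_hermiteKernel_mul {k : ℕ} {v : ℕ → ℝ → ℝ}
    (hv : ∀ m ≤ k + 1, ContinuousOn (v m) (Icc 0 1))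
    (hv' : ∀ m < k + 1, ∀ x ∈ Ioo 0 1, HasDerivAt (v m) (v (m + 1) x) x)
    (h0 : ∀ m ≤ k, v m 0 = 0) (h1 : ∀ m ≤ k, v m 1 = 0) :
    ∫ x in (0 : ℝ)..1, (derivative^[k + 1] (hermiteKernel k)).eval x * v (k + 1) x =
      ∫ x in (0 : ℝ)..1, v 0 x := by
  have h := integral_mul_iterated_by_parts zero_le_one (k + 1)
    (fun m x => (derivative^[k + 1 + m] (hermiteKernel k)).eval x) v
    (fun m _ => (derivative^[k + 1 + m] _).continuous.continuousOn) hv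
    (fun m _ x _ => hasDerivAt_iterate_derivative _ (k + 1 + m) x) hv'
    (fun i j hij => by simp only [h0 j (by omega), h1 j (by omega), mul_zero])
  rw [show k + 1 + (k + 1) = 2 * k + 2 by ring, iterate_derivative_hermiteKernel_top] at h
  simp only [eval_C, add_zero, integral_const_mul] at h
  rw [h, ← mul_assoc, ← mul_pow, neg_one_mul, neg_neg, one_pow, one_mul]

/-- Average formula for the Hermite interpolant: if `H` is the degree-`(2k+1)` Hermite
interpolant of a `C^{k+1}` function `φ` on `[0,1]` (matching derivatives of orders
`0,…,k` at both endpoints), then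
`∫_0^1 H = ∫_0^1 φ - ∫_0^1 μ_k φ^{(k+1)}`, where `μ_k = r_k^{(k+1)}` and
`r_k x = x^{k+1}(1-x)^{k+1}/(2k+2)!`. -/
theorem hermite_interpolant_average (k : ℕ) (φ : ℝ → ℝ)
    (hφ : ContDiffOn ℝ (k + 1 : ℕ) φ (Set.Icc 0 1))
    (H : Polynomial ℝ) (hdeg : H.natDegree ≤ 2 * k + 1)
    (h0 : ∀ α ≤ k, iteratedDeriv α (fun t => H.eval t) 0 =
        iteratedDerivWithin α φ (Set.Icc 0 1) 0)
    (h1 : ∀ α ≤ k, iteratedDeriv α (fun t => H.eval t) 1 =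
        iteratedDerivWithin α φ (Set.Icc 0 1) 1) :
    let r : ℝ → ℝ := fun x => x ^ (k + 1) * (1 - x) ^ (k + 1) / (Nat.factorial (2 * k + 2))
    let μ : ℝ → ℝ := iteratedDeriv (k + 1) r
    ∫ x in (0 : ℝ)..1, H.eval x =
      (∫ x in (0 : ℝ)..1, φ x) -
        ∫ x in (0 : ℝ)..1, μ x * iteratedDerivWithin (k + 1) φ (Set.Icc 0 1) x := by
  intro r μ
  have hμ : μ = fun x => (derivative^[k + 1] (hermiteKernel k)).eval x := by
    have hr : r = fun x => (hermiteKernel k).eval x :=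
      funext fun x => (hermiteKernel_eval k x).symm
    rw [← iteratedDeriv_eval, ← hr]
  have hs : UniqueDiffOn ℝ (Icc (0 : ℝ) 1) := uniqueDiffOn_Icc zero_lt_one
  have hφ' : ∀ m ≤ k + 1, ContinuousOn (iteratedDerivWithin m φ (Icc 0 1)) (Icc 0 1) :=
    fun m hm => hφ.continuousOn_iteratedDerivWithin (by exact_mod_cast hm) hs
  have herr := integral_iterate_derivative_hermiteKernel_mul
    (v := fun m x => iteratedDerivWithin m φ (Icc 0 1) x - (derivative^[m] H).eval x)
    (fun m hm => (hφ' m hm).sub (derivative^[m] H).continuous.continuousOn)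
    (fun m hm x hx => (hφ.hasDerivAt_iteratedDerivWithin (by exact_mod_cast hm) hs
      (Icc_mem_nhds hx.1 hx.2)).sub (hasDerivAt_iterate_derivative H m x))
    (fun m hm => by rw [← h0 m hm, iteratedDeriv_eval, sub_self])
    (fun m hm => by rw [← h1 m hm, iteratedDeriv_eval, sub_self])
  have horth := integral_iterate_derivative_hermiteKernel_mul_eq_zero hdeg
  simp only [mul_sub, iteratedDerivWithin_zero, Function.iterate_zero_apply] at herr
  rw [integral_sub, integral_sub, horth] at herr
  · rw [hμ]
    linarith
  · exact hφ.continuousOn.intervalIntegrable_of_Icc zero_le_one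
  · exact H.continuous.intervalIntegrable 0 1
  · exact ((derivative^[k + 1] _).continuous.continuousOn.mul (hφ' _ le_rfl))
      |>.intervalIntegrable_of_Icc zero_le_one
  · exact ((derivative^[k + 1] _).continuous.mul (derivative^[k + 1] H).continuous)
      |>.intervalIntegrable 0 1
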